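/- Let N ≥ 1 and let J_0, ..., J_N be strictly positive real numbers. Then the N×N tridiagonal matrix A with A_{ii} = J_{i-1} + J_i, A_{i,i+1} = A_{i+1,i} = -J_i, and zeros elsewhere, has strictly positive determinant. -/

import Mathlib

/-! The matrix factors as `A = Dᵀ diag(J) D`, where `D` is the `(N+1) × N` backward difference
matrix, `(D x)ⱼ = xⱼ - xⱼ₋₁` with `x₋₁ = x_N = 0`. If `D x = 0` then `x = 0`, by induction along
the indices, so `A` is positive definite and hence has positive determinant. -/

open Matrix

variable {R : Type*}

variable (R) in
def backwardDiffMatrix [Ring R] (n : ℕ) : Matrix (Fin (n + 1)) (Fin n) R :=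
  of fun j k => (if j = k.castSucc then 1 else 0) - (if j = k.succ then 1 else 0)

theorem backwardDiffMatrix_mulVec_castSucc [Ring R] {n : ℕ} (x : Fin n → R) (i : Fin n) :
    (backwardDiffMatrix R n *ᵥ x) i.castSucc = x i - ∑ k with k.succ = i.castSucc, x k := by
  simp [backwardDiffMatrix, mulVec, dotProduct, sub_mul, Finset.sum_sub_distrib, Finset.sum_ite,
    eq_comm]

theorem mulVec_backwardDiffMatrix_injective [Ring R] (n : ℕ) :
    Function.Injective (backwardDiffMatrix R n).mulVec := by
  intro x y hxy
  rw [← sub_eq_zero]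
  have hker : backwardDiffMatrix R n *ᵥ (x - y) = 0 := by rw [mulVec_sub, hxy, sub_self]
  generalize x - y = z at hker ⊢
  funext i
  induction i using WellFoundedLT.induction with
  | ind i ih =>
    have hprev : ∑ k with k.succ = i.castSucc, z k = 0 :=
      Finset.sum_eq_zero fun k hk => ih k <| by
        simp only [Finset.mem_filter, Finset.mem_univ, true_and, Fin.ext_iff, Fin.val_succ,
          Fin.val_castSucc] at hk
        rw [Fin.lt_def]
        omega
    have hi := congr_fun hker i.castSucc
    rwa [backwardDiffMatrix_mulVec_castSucc, hprev, sub_zero] at hi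

/-- The Laplacian of the path `0 — 1 — ⋯ — n+1` with weight `J i` on the edge `i — i+1`,
restricted to the interior vertices `1, …, n`. -/
def groundedPathLaplacian [CommRing R] {n : ℕ} (J : Fin (n + 1) → R) : Matrix (Fin n) (Fin n) R :=
  (backwardDiffMatrix R n)ᵀ * diagonal J * backwardDiffMatrix R n

theorem groundedPathLaplacian_apply [CommRing R] {n : ℕ} (J : Fin (n + 1) → R) (k l : Fin n) :
    groundedPathLaplacian J k l =
      if k = l then J k.castSucc + J k.succ
        else if (l : ℕ) = (k : ℕ) + 1 then -J k.succ
        else if (k : ℕ) = (l : ℕ) + 1 then -J l.succ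
        else 0 := by
  have hsum : groundedPathLaplacian J k l =
      J k.castSucc * backwardDiffMatrix R n k.castSucc l -
        J k.succ * backwardDiffMatrix R n k.succ l := by
    simp [groundedPathLaplacian, mul_apply, backwardDiffMatrix, sub_mul, Finset.sum_sub_distrib,
      diagonal_apply, ite_mul]
  rw [hsum]
  simp only [backwardDiffMatrix, of_apply]
  grind

theorem groundedPathLaplacian_posDef {n : ℕ} {J : Fin (n + 1) → ℝ} (hJ : ∀ i, 0 < J i) :
    (groundedPathLaplacian J).PosDef := by
  simpa [groundedPathLaplacian] using
    (posDef_diagonal_iff.2 hJ).conjTranspose_mul_mul_same (mulVec_backwardDiffMatrix_injective n)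

theorem tridiag_det_pos_general (N : ℕ) (J : Fin (N + 1) → ℝ)
    (hJ : ∀ i, 0 < J i)
    (A : Matrix (Fin N) (Fin N) ℝ)
    (hA : ∀ k l : Fin N,
      A k l = if k = l then J k.castSucc + J k.succ
        else if (l : ℕ) = (k : ℕ) + 1 then -J k.succ
        else if (k : ℕ) = (l : ℕ) + 1 then -J l.succ
        else 0) :
    0 < A.det := by
  have hA_eq : A = groundedPathLaplacian J := by
    ext k l
    rw [hA, groundedPathLaplacian_apply]
  rw [hA_eq]
  exact (groundedPathLaplacian_posDef hJ).det_pos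

/-- If all `J_i > 0`, the symmetric tridiagonal matrix `A` has positive determinant. -/
theorem tridiag_det_pos (N : ℕ) (hN : 1 ≤ N) (J : Fin (N + 1) → ℝ)
    (hJ : ∀ i, 0 < J i)
    (A : Matrix (Fin N) (Fin N) ℝ)
    (hA : ∀ k l : Fin N,
      A k l = if k = l then J k.castSucc + J k.succ
        else if (l : ℕ) = (k : ℕ) + 1 then -J k.succ
        else if (k : ℕ) = (l : ℕ) + 1 then -J l.succ
        else 0) :
    0 < A.det :=
  tridiag_det_pos_general N J hJ A hA
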